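/- For every real number k and every complex number z with Im z > 0, P_k(z − 1/6) + P_k(z + 1/6) = P_k(z) + 2^{1−k}·P_k(4z) + 3^{1−k}·P_k(9z) − (2^k + 1)·( 2^{1−k}·P_k(2z) + 6^{1−k}·P_k(18z) ) − (3^k + 1)·( 3^{1−k}·P_k(3z) + 6^{1−k}·P_k(12z) ) + 6^{1−k}·( (2^k + 1)·(3^k + 1)·P_k(6z) + P_k(36z) ). -/

import Mathlib

/-!
Write `E(w) = e(w) / (1 - e(w))` with `e(w) = exp(2πiw)`, so that `P_k(z) = ∑ n⁻ᵏ E(nz)`.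
The function `E` is `1`-periodic and satisfies the distribution relations
`E(w + 1/2) = 2E(2w) - E(w)` and `E(w) + E(w + 1/3) + E(w + 2/3) = 3E(3w)`. Combining them
according to `n mod 6` gives
`E(n(z - 1/6)) + E(n(z + 1/6)) = E(nz) - 2E(lcm(n,2)z) - 3E(lcm(n,3)z) + 6E(lcm(n,6)z)`,
so the left-hand side is `S₁ - 2S₂ - 3S₃ + 6S₆` with `S_d(z) = ∑ n⁻ᵏ E(lcm(n,d)z)` and `S₁ = P_k`.
For a prime `p ∤ d`, the terms of `S_{pd}(z)` and `S_d(pz)` agree off the multiples of `p`, and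
on `n = pm` they are `p⁻ᵏ` times the terms of `S_d(pz)` and `S_d(p²z)`; hence
`S_{pd}(z) = (1 + p⁻ᵏ) S_d(pz) - p⁻ᵏ S_d(p²z)`, which expresses `S₂`, `S₃`, `S₆` through `P_k`.
-/

/-- P_k(z) = Σ_{n=1}^∞ n^{−k} · e^{2πinz}/(1 − e^{2πinz}), for real k and Im z > 0. -/
noncomputable def P (k : ℝ) (z : ℂ) : ℂ :=
  ∑' n : ℕ+, (n : ℂ) ^ (-(k : ℂ)) *
    (Complex.exp (2 * Real.pi * Complex.I * n * z) /
      (1 - Complex.exp (2 * Real.pi * Complex.I * n * z)))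

open Complex
open scoped Real

lemma Nat.lcm_eq_mul_div_gcd_mod {n d m : ℕ} (hd : d ∣ m) :
    Nat.lcm n d = n * (d / Nat.gcd (n % m) d) := by
  rw [Nat.lcm_eq_mul_div, Nat.mul_div_assoc _ (Nat.gcd_dvd_right _ _), Nat.gcd_comm n d,
    Nat.gcd_rec d n, Nat.gcd_comm (n % m) d, Nat.gcd_rec d (n % m), Nat.mod_mod_of_dvd n hd]

lemma Nat.Coprime.lcm_mul_left_eq {p d : ℕ} (h : Nat.Coprime p d) (m : ℕ) :
    Nat.lcm (p * m) d = p * Nat.lcm m d := by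
  rw [Nat.lcm_eq_mul_div, Nat.lcm_eq_mul_div, h.gcd_mul_left_cancel, mul_assoc,
    Nat.mul_div_assoc _ (Nat.gcd_dvd_mul _ _)]

lemma tsum_sub_tsum_eq_tsum_mul_left {α : Type*} [AddCommGroup α] [TopologicalSpace α]
    [IsTopologicalAddGroup α] [T2Space α] {f g : ℕ+ → α} (hf : Summable f) (hg : Summable g)
    (p : ℕ+) (hfg : ∀ n, ¬ p ∣ n → f n = g n) :
    ∑' n, f n - ∑' n, g n = ∑' m, (f (p * m) - g (p * m)) := by
  rw [← hf.tsum_sub hg]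
  refine ((mul_right_injective p).tsum_eq fun n hn => ?_).symm
  by_cases hpn : p ∣ n
  · obtain ⟨m, rfl⟩ := hpn
    exact ⟨m, rfl⟩
  · exact absurd (sub_eq_zero.2 (hfg n hpn)) hn

lemma Real.rpow_one_sub_eq_mul_rpow_neg {x : ℝ} (hx : 0 < x) (k : ℝ) :
    x ^ (1 - k) = x * x ^ (-k) := by
  rw [sub_eq_add_neg, Real.rpow_add hx, Real.rpow_one]

lemma Real.rpow_mul_rpow_neg {x : ℝ} (hx : 0 < x) (k : ℝ) : x ^ k * x ^ (-k) = 1 := by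
  rw [← Real.rpow_add hx, add_neg_cancel, Real.rpow_zero]

lemma norm_div_one_sub_le {x : ℂ} (hx : ‖x‖ < 1) : ‖x / (1 - x)‖ ≤ ‖x‖ / (1 - ‖x‖) := by
  rw [norm_div]
  refine div_le_div_of_nonneg_left (norm_nonneg x) (sub_pos.2 hx) ?_
  simpa using norm_sub_norm_le (1 : ℂ) x

lemma im_natCast_mul_pos {c : ℕ} (hc : 0 < c) {z : ℂ} (hz : 0 < z.im) :
    0 < ((c : ℂ) * z).im := by
  simpa using mul_pos (Nat.cast_pos.2 hc) hz

noncomputable def lambertTerm (w : ℂ) : ℂ :=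
  cexp (2 * π * I * w) / (1 - cexp (2 * π * I * w))

lemma norm_cexp_two_pi_I_mul_lt_one {w : ℂ} (hw : 0 < w.im) :
    ‖cexp (2 * π * I * w)‖ < 1 := by
  simpa [Function.Periodic.qParam] using Function.Periodic.norm_qParam_lt_one one_pos hw

lemma one_sub_cexp_two_pi_I_mul_ne_zero {w : ℂ} (hw : 0 < w.im) :
    1 - cexp (2 * π * I * w) ≠ 0 :=
  sub_ne_zero.2 fun h => by simpa [← h] using norm_cexp_two_pi_I_mul_lt_one hw

lemma cexp_two_pi_I_mul_add (w t : ℂ) :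
    cexp (2 * π * I * (w + t)) = cexp (2 * π * I * w) * cexp (2 * π * I * t) := by
  rw [mul_add, exp_add]

lemma cexp_two_pi_I_mul_nat_mul (n : ℕ) (w : ℂ) :
    cexp (2 * π * I * (n * w)) = cexp (2 * π * I * w) ^ n := by
  rw [← exp_nat_mul]; ring_nf

lemma lambertTerm_periodic : Function.Periodic lambertTerm 1 := fun w => by
  simp only [lambertTerm, cexp_two_pi_I_mul_add, mul_one, exp_two_pi_mul_I]

lemma lambertTerm_add_half {w : ℂ} (hw : 0 < w.im) :
    lambertTerm (w + 1 / 2) = 2 * lambertTerm (2 * w) - lambertTerm w := by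
  have h₁ := one_sub_cexp_two_pi_I_mul_ne_zero hw
  have h₂ := one_sub_cexp_two_pi_I_mul_ne_zero (w := w + 1 / 2) (by simpa using hw)
  have h₃ := one_sub_cexp_two_pi_I_mul_ne_zero (w := 2 * w) (by simpa using hw)
  have hhalf : cexp (2 * π * I * (1 / 2)) = -1 := by
    rw [show 2 * π * I * (1 / 2) = π * I by ring, exp_pi_mul_I]
  have hsq : cexp (2 * π * I * (2 * w)) = cexp (2 * π * I * w) ^ 2 := by
    simpa using cexp_two_pi_I_mul_nat_mul 2 w
  rw [cexp_two_pi_I_mul_add, hhalf, mul_neg_one, sub_neg_eq_add] at h₂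
  rw [hsq] at h₃
  rw [lambertTerm, lambertTerm, lambertTerm, cexp_two_pi_I_mul_add, hhalf, hsq, mul_neg_one,
    sub_neg_eq_add]
  field_simp
  ring

lemma lambertTerm_add_third {w : ℂ} (hw : 0 < w.im) :
    lambertTerm w + lambertTerm (w + 1 / 3) + lambertTerm (w + 2 / 3) =
      3 * lambertTerm (3 * w) := by
  have hω : 1 + cexp (2 * π * I * (1 / 3)) + cexp (2 * π * I * (1 / 3)) ^ 2 = 0 := by
    have := (isPrimitiveRoot_exp 3 (by norm_num)).geom_sum_eq_zero (by norm_num)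
    simpa [Finset.sum_range_succ, div_eq_mul_one_div (2 * π * I)] using this
  have hω2 : cexp (2 * π * I * (2 / 3)) = cexp (2 * π * I * (1 / 3)) ^ 2 := by
    rw [← cexp_two_pi_I_mul_nat_mul]; norm_num
  have hcube : cexp (2 * π * I * (3 * w)) = cexp (2 * π * I * w) ^ 3 := by
    simpa using cexp_two_pi_I_mul_nat_mul 3 w
  have h₁ := one_sub_cexp_two_pi_I_mul_ne_zero hw
  have h₂ := one_sub_cexp_two_pi_I_mul_ne_zero (w := w + 1 / 3) (by simpa using hw)
  have h₃ := one_sub_cexp_two_pi_I_mul_ne_zero (w := w + 2 / 3) (by simpa using hw)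
  have h₄ := one_sub_cexp_two_pi_I_mul_ne_zero (w := 3 * w) (by simpa using hw)
  rw [cexp_two_pi_I_mul_add] at h₂ h₃
  rw [hω2] at h₃
  rw [hcube] at h₄
  rw [lambertTerm, lambertTerm, lambertTerm, lambertTerm, cexp_two_pi_I_mul_add,
    cexp_two_pi_I_mul_add, hω2, hcube]
  set x := cexp (2 * π * I * w)
  set ω := cexp (2 * π * I * (1 / 3))
  rw [div_add_div _ _ h₁ h₂, div_add_div _ _ (mul_ne_zero h₁ h₂) h₃, mul_div_assoc',
    div_eq_div_iff (mul_ne_zero (mul_ne_zero h₁ h₂) h₃) h₄]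
  -- the coefficient is the quotient of the cross-multiplied identity by `1 + ω + ω ^ 2`
  linear_combination (x - 3 * x ^ 3 - 2 * ω * x ^ 2 + 3 * ω * x ^ 3 + 2 * x ^ 4 - ω * x ^ 5) * hω

lemma lambertTerm_sub_add_eq_sub_add_one_sub (w t : ℂ) :
    lambertTerm (w - t) + lambertTerm (w + t) =
      lambertTerm (w - (1 - t)) + lambertTerm (w + (1 - t)) := by
  rw [← lambertTerm_periodic.sub_eq (w + (1 - t)), ← lambertTerm_periodic (w - (1 - t))]
  ring_nf

lemma lambertTerm_sub_add_half {w : ℂ} (hw : 0 < w.im) :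
    lambertTerm (w - 1 / 2) + lambertTerm (w + 1 / 2) =
      4 * lambertTerm (2 * w) - 2 * lambertTerm w := by
  rw [show w - 1 / 2 = w + 1 / 2 - 1 by ring, lambertTerm_periodic.sub_eq, lambertTerm_add_half hw]
  ring

lemma lambertTerm_sub_add_third {w : ℂ} (hw : 0 < w.im) :
    lambertTerm (w - 1 / 3) + lambertTerm (w + 1 / 3) =
      3 * lambertTerm (3 * w) - lambertTerm w := by
  rw [← lambertTerm_add_third hw, ← lambertTerm_periodic (w - 1 / 3)]
  ring_nf

lemma lambertTerm_sub_add_sixth {w : ℂ} (hw : 0 < w.im) :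
    lambertTerm (w - 1 / 6) + lambertTerm (w + 1 / 6) =
      lambertTerm w - 2 * lambertTerm (2 * w) - 3 * lambertTerm (3 * w)
        + 6 * lambertTerm (6 * w) := by
  have h := lambertTerm_add_third (w := w + 1 / 2) (by simpa using hw)
  rw [lambertTerm_add_half hw, ← lambertTerm_periodic.sub_eq (w + 1 / 2 + 1 / 3),
    ← lambertTerm_periodic.sub_eq (w + 1 / 2 + 2 / 3),
    show 3 * (w + 1 / 2) = 3 * w + 1 / 2 + 1 by ring,
    lambertTerm_periodic, lambertTerm_add_half (by simpa using hw)] at h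
  ring_nf at h ⊢
  linear_combination h

lemma lambertTerm_nat_mul_sub_add_sixth {z : ℂ} (hz : 0 < z.im) (n : ℕ+) :
    lambertTerm (n * (z - 1 / 6)) + lambertTerm (n * (z + 1 / 6)) =
      lambertTerm (n * z) - 2 * lambertTerm (Nat.lcm n 2 * z) - 3 * lambertTerm (Nat.lcm n 3 * z)
        + 6 * lambertTerm (Nat.lcm n 6 * z) := by
  set w : ℂ := n * z
  have hw : 0 < w.im := im_natCast_mul_pos n.pos hz
  have hlcm (d : ℕ) (hd : d ∣ 6) :
      (Nat.lcm n d : ℂ) * z = (d / Nat.gcd (n % 6) d : ℕ) * w := by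
    rw [Nat.lcm_eq_mul_div_gcd_mod hd]; push_cast; ring
  have hshift : (n : ℂ) / 6 = (n / 6 : ℕ) + (n % 6 : ℕ) / 6 := by
    nth_rw 1 [← Nat.div_add_mod (n : ℕ) 6]; push_cast; ring
  rw [hlcm 2 (by norm_num), hlcm 3 (by norm_num), hlcm 6 (by norm_num),
    show (n : ℂ) * (z - 1 / 6) = w - (n % 6 : ℕ) / 6 - (n / 6 : ℕ) * 1 by
      rw [mul_sub, mul_one_div, hshift]; ring,
    show (n : ℂ) * (z + 1 / 6) = w + (n % 6 : ℕ) / 6 + (n / 6 : ℕ) * 1 by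
      rw [mul_add, mul_one_div, hshift]; ring,
    lambertTerm_periodic.sub_nat_mul_eq, lambertTerm_periodic.nat_mul]
  have hr : (n : ℕ) % 6 < 6 := Nat.mod_lt _ (by norm_num)
  generalize (n : ℕ) % 6 = r at hr ⊢
  interval_cases r <;> norm_num
  · ring
  · exact lambertTerm_sub_add_sixth hw
  · linear_combination lambertTerm_sub_add_third hw
  · linear_combination lambertTerm_sub_add_half hw
  · rw [lambertTerm_sub_add_eq_sub_add_one_sub]
    norm_num
    linear_combination lambertTerm_sub_add_third hw
  · rw [lambertTerm_sub_add_eq_sub_add_one_sub]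
    norm_num
    exact lambertTerm_sub_add_sixth hw

lemma norm_lambertTerm_nat_mul_le {z : ℂ} (hz : 0 < z.im) {m n : ℕ} (hn : 0 < n)
    (hnm : n ≤ m) :
    ‖lambertTerm (m * z)‖ ≤
      ‖cexp (2 * π * I * z)‖ ^ n / (1 - ‖cexp (2 * π * I * z)‖ ^ n) := by
  set r := ‖cexp (2 * π * I * z)‖
  have hr : r < 1 := norm_cexp_two_pi_I_mul_lt_one hz
  have hrm : r ^ m ≤ r ^ n := pow_le_pow_of_le_one (norm_nonneg _) hr.le hnm
  have hrn : r ^ n < 1 := pow_lt_one₀ (norm_nonneg _) hr hn.ne'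
  rw [lambertTerm, cexp_two_pi_I_mul_nat_mul]
  refine (norm_div_one_sub_le (by rw [norm_pow]; exact hrm.trans_lt hrn)).trans ?_
  rw [norm_pow]
  exact div_le_div₀ (by positivity) hrm (sub_pos.2 hrn) (by linarith)

lemma norm_natCast_cpow_neg_le (k : ℝ) {n : ℕ} (hn : 0 < n) :
    ‖(n : ℂ) ^ (-(k : ℂ))‖ ≤ (n : ℝ) ^ ⌈-k⌉₊ := by
  rw [norm_natCast_cpow_of_pos hn, ← Real.rpow_natCast]
  exact Real.rpow_le_rpow_of_exponent_le (by exact_mod_cast hn) (by simpa using Nat.le_ceil (-k))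

lemma summable_cpow_mul_lambertTerm (k : ℝ) {z : ℂ} (hz : 0 < z.im) {m : ℕ+ → ℕ}
    (hm : ∀ n : ℕ+, (n : ℕ) ≤ m n) :
    Summable fun n : ℕ+ => (n : ℂ) ^ (-(k : ℂ)) * lambertTerm (m n * z) := by
  set r := ‖cexp (2 * π * I * z)‖
  have hbound : Summable fun n : ℕ => (n : ℝ) ^ ⌈-k⌉₊ * r ^ n / (1 - r ^ n) :=
    summable_norm_pow_mul_geometric_div_one_sub _ <| by
      rw [Real.norm_eq_abs, abs_norm]; exact norm_cexp_two_pi_I_mul_lt_one hz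
  refine .of_norm_bounded (hbound.comp_injective PNat.coe_injective) fun n => ?_
  rw [norm_mul, Function.comp_apply, mul_div_assoc]
  exact mul_le_mul (norm_natCast_cpow_neg_le k n.pos)
    (norm_lambertTerm_nat_mul_le hz n.pos (hm n)) (norm_nonneg _) (by positivity)

lemma P_eq_tsum (k : ℝ) (z : ℂ) :
    P k z = ∑' n : ℕ+, (n : ℂ) ^ (-(k : ℂ)) * lambertTerm (n * z) := by
  simp only [P, lambertTerm, mul_assoc]

noncomputable def lcmSeries (k : ℝ) (d : ℕ) (z : ℂ) : ℂ :=
  ∑' n : ℕ+, (n : ℂ) ^ (-(k : ℂ)) * lambertTerm (Nat.lcm n d * z)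

lemma summable_lcmSeries (k : ℝ) {d : ℕ} (hd : 0 < d) {z : ℂ} (hz : 0 < z.im) :
    Summable fun n : ℕ+ => (n : ℂ) ^ (-(k : ℂ)) * lambertTerm (Nat.lcm n d * z) :=
  summable_cpow_mul_lambertTerm k hz fun _ => Nat.le_lcm_left _ hd

lemma lcmSeries_one (k : ℝ) (z : ℂ) : lcmSeries k 1 z = P k z := by
  simp [lcmSeries, P_eq_tsum]

lemma lcmSeries_prime_mul (k : ℝ) {p d : ℕ} (hp : p.Prime) (hpd : ¬ p ∣ d) (hd : 0 < d) {z : ℂ}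
    (hz : 0 < z.im) :
    lcmSeries k (p * d) z = (1 + ((p : ℝ) ^ (-k) : ℝ)) * lcmSeries k d (p * z)
      - ((p : ℝ) ^ (-k) : ℝ) * lcmSeries k d (p ^ 2 * z) := by
  set c : ℂ := (((p : ℝ) ^ (-k) : ℝ) : ℂ) with hc
  have hpz : 0 < ((p : ℂ) * z).im := im_natCast_mul_pos hp.pos hz
  have hp2z : 0 < ((p : ℂ) ^ 2 * z).im := by
    simpa only [Nat.cast_pow] using im_natCast_mul_pos (pow_pos hp.pos 2) hz
  have hcop : Nat.Coprime p d := (Nat.Prime.coprime_iff_not_dvd hp).2 hpd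
  obtain ⟨p', hp'⟩ : ∃ p' : ℕ+, (p' : ℕ) = p := ⟨⟨p, hp.pos⟩, rfl⟩
  have hcpow (m : ℕ+) : ((p' * m : ℕ+) : ℂ) ^ (-(k : ℂ)) = c * (m : ℂ) ^ (-(k : ℂ)) := by
    rw [PNat.mul_coe, hp', Nat.cast_mul, natCast_mul_natCast_cpow, hc,
      ofReal_cpow (Nat.cast_nonneg _)]
    push_cast; rfl
  have hsplit := tsum_sub_tsum_eq_tsum_mul_left (summable_lcmSeries k (Nat.mul_pos hp.pos hd) hz)
    (summable_lcmSeries k hd hpz) p' fun n hn => by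
      have hcopn : Nat.Coprime p n :=
        (Nat.Prime.coprime_iff_not_dvd hp).2 (by rwa [PNat.dvd_iff, hp'] at hn)
      rw [Nat.lcm_comm, hcopn.lcm_mul_left_eq, Nat.lcm_comm]
      push_cast; ring_nf
  have hmultiples : ∑' m : ℕ+,
      (((p' * m : ℕ+) : ℂ) ^ (-(k : ℂ)) * lambertTerm (Nat.lcm (p' * m : ℕ+) (p * d) * z)
        - ((p' * m : ℕ+) : ℂ) ^ (-(k : ℂ)) * lambertTerm (Nat.lcm (p' * m : ℕ+) d * (p * z))) =
      c * (lcmSeries k d (p * z) - lcmSeries k d (p ^ 2 * z)) := by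
    rw [lcmSeries, lcmSeries,
      ← (summable_lcmSeries k hd hpz).tsum_sub (summable_lcmSeries k hd hp2z), ← tsum_mul_left]
    refine tsum_congr fun m => ?_
    rw [hcpow, PNat.mul_coe, hp', Nat.lcm_mul_left, hcop.lcm_mul_left_eq]
    push_cast; ring_nf
  unfold lcmSeries at *
  linear_combination hsplit + hmultiples

lemma P_sub_add_P_add_sixth (k : ℝ) {z : ℂ} (hz : 0 < z.im) :
    P k (z - 1 / 6) + P k (z + 1 / 6) =
      P k z - 2 * lcmSeries k 2 z - 3 * lcmSeries k 3 z + 6 * lcmSeries k 6 z := by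
  have him (t : ℝ) : 0 < (z + t).im := by simpa using hz
  have hminus : Summable fun n : ℕ+ => (n : ℂ) ^ (-(k : ℂ)) * lambertTerm (n * (z - 1 / 6)) :=
    summable_cpow_mul_lambertTerm k (m := fun n => n) (by simpa using him (-(1 / 6)))
      fun _ => le_rfl
  have hplus : Summable fun n : ℕ+ => (n : ℂ) ^ (-(k : ℂ)) * lambertTerm (n * (z + 1 / 6)) :=
    summable_cpow_mul_lambertTerm k (m := fun n => n) (by simpa using him (1 / 6))
      fun _ => le_rfl
  have hS (d : ℕ) (hd : 0 < d) := (summable_lcmSeries k hd hz).hasSum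
  rw [P_eq_tsum, P_eq_tsum, ← hminus.tsum_add hplus, ← lcmSeries_one]
  refine ((((hS 1 one_pos).sub ((hS 2 two_pos).mul_left 2)).sub ((hS 3 three_pos).mul_left 3)).add
    ((hS 6 (by norm_num)).mul_left 6)).tsum_eq ▸ tsum_congr fun n => ?_
  rw [← mul_add, lambertTerm_nat_mul_sub_add_sixth hz, Nat.lcm_one_right]
  ring

theorem sextupling (k : ℝ) (z : ℂ) (hz : 0 < z.im) :
    P k (z - 1 / 6) + P k (z + 1 / 6) =
      P k z + (((2 : ℝ) ^ (1 - k) : ℝ) : ℂ) * P k (4 * z)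
        + (((3 : ℝ) ^ (1 - k) : ℝ) : ℂ) * P k (9 * z)
        - ((((2 : ℝ) ^ k : ℝ) : ℂ) + 1) *
            ((((2 : ℝ) ^ (1 - k) : ℝ) : ℂ) * P k (2 * z)
              + (((6 : ℝ) ^ (1 - k) : ℝ) : ℂ) * P k (18 * z))
        - ((((3 : ℝ) ^ k : ℝ) : ℂ) + 1) *
            ((((3 : ℝ) ^ (1 - k) : ℝ) : ℂ) * P k (3 * z)
              + (((6 : ℝ) ^ (1 - k) : ℝ) : ℂ) * P k (12 * z))
        + (((6 : ℝ) ^ (1 - k) : ℝ) : ℂ) *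
            (((((2 : ℝ) ^ k : ℝ) : ℂ) + 1) * ((((3 : ℝ) ^ k : ℝ) : ℂ) + 1) * P k (6 * z)
              + P k (36 * z)) := by
  have hS2 (w : ℂ) (hw : 0 < w.im) :=
    lcmSeries_prime_mul k Nat.prime_two (d := 1) (by norm_num) one_pos hw
  have hS3 := lcmSeries_prime_mul k Nat.prime_three (d := 1) (by norm_num) one_pos hz
  have hS6 := lcmSeries_prime_mul k Nat.prime_three (d := 2) (by norm_num) two_pos hz
  simp only [Nat.cast_ofNat, mul_one, Nat.reduceMul, lcmSeries_one] at hS2 hS3 hS6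
  rw [P_sub_add_P_add_sixth k hz, hS3, hS6, hS2 z hz, hS2 (3 * z) (by simpa using hz),
    hS2 (3 ^ 2 * z) (by norm_num; exact hz)]
  norm_num only [← mul_assoc]
  have h2 : (((2 : ℝ) ^ k : ℝ) : ℂ) * ((2 : ℝ) ^ (-k) : ℝ) = 1 := by
    exact_mod_cast Real.rpow_mul_rpow_neg (by norm_num) k
  have h3 : (((3 : ℝ) ^ k : ℝ) : ℂ) * ((3 : ℝ) ^ (-k) : ℝ) = 1 := by
    exact_mod_cast Real.rpow_mul_rpow_neg (by norm_num) k
  rw [Real.rpow_one_sub_eq_mul_rpow_neg (x := 2) (by norm_num),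
    Real.rpow_one_sub_eq_mul_rpow_neg (x := 3) (by norm_num),
    Real.rpow_one_sub_eq_mul_rpow_neg (x := 6) (by norm_num),
    show (6 : ℝ) = 2 * 3 by norm_num, Real.mul_rpow (by norm_num) (by norm_num)]
  set a : ℝ := 2 ^ (-k)
  set b : ℝ := 3 ^ (-k)
  push_cast
  linear_combination (2 * P k (2 * z) + 6 * b * P k (18 * z) - 6 * b * P k (6 * z)
      - 6 * ((3 : ℝ) ^ k : ℝ) * b * P k (6 * z)) * h2
    + (3 * P k (3 * z) + 6 * a * P k (12 * z) - 6 * a * P k (6 * z) - 6 * P k (6 * z))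
      * h3
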